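/- arXiv:2312.13175 — 2 statements merged into one kernel-verified Lean document; each statement's English description precedes it below -/
import Mathlib

section
/- (Proposition 1, converse direction, PE part) Let G : 𝕏×𝕏×ℙ×ℙ → ℝ_{≥0} be a joint i-IOSS Lyapunov function, i.e., there exist symmetric positive definite matrices G_lo, G_hi (of size (n+o)×(n+o)), Q, R, and η ∈ [0,1) such that ‖(x−x̃, p−p̃)‖²_{G_lo} ≤ G(x,x̃,p,p̃) ≤ ‖(x−x̃, p−p̃)‖²_{G_hi} and G(f(x,u,w,p), f(x̃,u,w̃,p̃), p, p̃) ≤ η G(x,x̃,p,p̃) + ‖w−w̃‖²_Q + ‖h(x,u,w,p)−h(x̃,u,w̃,p̃)‖²_R for all (x,u,w,p),(x̃,u,w̃,p̃) ∈ ℤ. Then for every T ∈ ℕ with λ_min(G_lo) − λ_max(G_hi)η^T > 0 (and such T exists since η < 1), every K ≥ T, and every pair of length-K system trajectories in ℤ with common inputs and outputs y_t, ỹ_t: (λ_min(G_lo) − λ_max(G_hi)η^T)‖p−p̃‖² ≤ λ_max(G_hi)η^K‖x_0−x̃_0‖² + Σ_{j=1}^{K} η^{j−1}(‖w_{K−j}−w̃_{K−j}‖²_Q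 + ‖y_{K−j}−ỹ_{K−j}‖²_R); in particular, Assumption 3 (uniform persistent excitation) holds with S_p := (λ_min(G_lo)−λ_max(G_hi)η^T)I, P_p := λ_max(G_hi)I, Q_p := Q, R_p := R, η_p := η. -/
/-! Along two trajectories with common inputs the dissipation inequality iterates to
`G(x_K, x̃_K, p, p̃) ≤ η^K G(x_0, x̃_0, p, p̃) + Σ_j η^(K-1-j) (‖w_j - w̃_j‖²_Q + ‖y_j - ỹ_j‖²_R)`.
The lower sandwich bound at time `K`, with the state part dropped, gives
`λ_min(G_lo) ‖p - p̃‖² ≤ G(x_K, x̃_K, p, p̃)`, and the upper one at time `0` gives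
`G(x_0, x̃_0, p, p̃) ≤ λ_max(G_hi) (‖x_0 - x̃_0‖² + ‖p - p̃‖²)`. Moving the resulting
`λ_max(G_hi) η^K ‖p - p̃‖²` to the left and using `η^K ≤ η^T` yields the estimate; such a `T`
exists because `λ_min(G_lo) > 0` and `η^T → 0`. -/

open Matrix Finset

/-- Weighted squared norm `‖v‖_Q² = vᵀ Q v`. -/
noncomputable def quad {ι : Type*} [Fintype ι] (Q : Matrix ι ι ℝ) (v : ι → ℝ) : ℝ :=
  v ⬝ᵥ Q.mulVec v

/-- Membership in the constraint set `ℤ = {(x,u,w,p) ∈ 𝕏×𝕌×𝕎×ℙ : f(x,u,w,p) ∈ 𝕏}`. -/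
def ZmemS {n m q o : ℕ}
    (f : (Fin n → ℝ) → (Fin m → ℝ) → (Fin q → ℝ) → (Fin o → ℝ) → (Fin n → ℝ))
    (Xs : Set (Fin n → ℝ)) (Us : Set (Fin m → ℝ)) (Ws : Set (Fin q → ℝ))
    (Ps : Set (Fin o → ℝ))
    (xx : Fin n → ℝ) (uu : Fin m → ℝ) (ww : Fin q → ℝ) (pp : Fin o → ℝ) : Prop :=
  xx ∈ Xs ∧ uu ∈ Us ∧ ww ∈ Ws ∧ pp ∈ Ps ∧ f xx uu ww pp ∈ Xs

theorem quad_smul_one {ι : Type*} [Fintype ι] [DecidableEq ι] (c : ℝ) (v : ι → ℝ) :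
    quad (c • (1 : Matrix ι ι ℝ)) v = c * (v ⬝ᵥ v) := by
  simp [quad, smul_mulVec, dotProduct_smul]

theorem quad_smul {ι : Type*} [Fintype ι] (A : Matrix ι ι ℝ) (c : ℝ) (v : ι → ℝ) :
    quad A (c • v) = c ^ 2 * quad A v := by
  simp only [quad, mulVec_smul, dotProduct_smul, smul_dotProduct, smul_eq_mul]
  ring

theorem continuous_quad {ι : Type*} [Fintype ι] (A : Matrix ι ι ℝ) : Continuous (quad A) :=
  continuous_id.dotProduct (continuous_const.matrix_mulVec continuous_id)

theorem dotProduct_self_nonneg {ι R : Type*} [Fintype ι] [Ring R] [LinearOrder R]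
    [IsStrictOrderedRing R] (v : ι → R) : 0 ≤ v ⬝ᵥ v :=
  Finset.sum_nonneg fun i _ => mul_self_nonneg (v i)

theorem Matrix.PosDef.exists_pos_mul_dotProduct_le_quad {ι : Type*} [Fintype ι]
    [DecidableEq ι] {A : Matrix ι ι ℝ} (hA : A.PosDef) :
    ∃ c > 0, ∀ v : ι → ℝ, c * (v ⬝ᵥ v) ≤ quad A v := by
  rcases isEmpty_or_nonempty ι with hι | hι
  · exact ⟨1, one_pos, fun v => by simp [quad, dotProduct]⟩
  let F : EuclideanSpace ℝ ι → ℝ := fun e => quad A e.ofLp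
  have hF : Continuous F := (continuous_quad A).comp (PiLp.continuous_ofLp 2 _)
  obtain ⟨u, hu, hmin⟩ := (isCompact_sphere (0 : EuclideanSpace ℝ ι) 1).exists_isMinOn
    (NormedSpace.sphere_nonempty.mpr zero_le_one) hF.continuousOn
  have hu0 : u.ofLp ≠ 0 := fun h0 => by simp_all
  refine ⟨F u, by simpa [F, quad] using hA.dotProduct_mulVec_pos hu0, fun v => ?_⟩
  rcases eq_or_ne v 0 with rfl | hv
  · simp [quad]
  set e : EuclideanSpace ℝ ι := WithLp.toLp 2 v
  have he : ‖e‖ ^ 2 = v ⬝ᵥ v := by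
    rw [← real_inner_self_eq_norm_sq, EuclideanSpace.inner_eq_star_dotProduct]; simp [e]
  have hne : 0 < ‖e‖ := norm_pos_iff.mpr (by simpa [e] using hv)
  have hmin_e : F u ≤ ‖e‖⁻¹ ^ 2 * quad A v := by
    have := hmin (show ‖e‖⁻¹ • e ∈ Metric.sphere 0 1 by
      simp [norm_smul, hne.ne'])
    simpa [F, e, quad_smul] using this
  calc F u * (v ⬝ᵥ v) = F u * ‖e‖ ^ 2 := by rw [he]
    _ ≤ ‖e‖⁻¹ ^ 2 * quad A v * ‖e‖ ^ 2 := by gcongr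
    _ = quad A v := by field_simp

theorem Matrix.PosSemidef.nonneg_of_isLeast_quad_le {ι : Type*} [Fintype ι]
    [DecidableEq ι] {A : Matrix ι ι ℝ} (hA : A.PosSemidef) {l : ℝ}
    (hl : IsLeast {l : ℝ | ∀ v : ι → ℝ, quad A v ≤ l * (v ⬝ᵥ v)} l) : 0 ≤ l := by
  rcases isEmpty_or_nonempty ι with hι | ⟨⟨i⟩⟩
  · have := hl.2 (show l - 1 ∈ _ from fun v => by simp [quad, dotProduct])
    linarith
  · have hquad : 0 ≤ quad A (Pi.single i 1) := by
      simpa [quad] using hA.dotProduct_mulVec_nonneg (Pi.single i 1)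
    simpa using hquad.trans (hl.1 (Pi.single i 1))

theorem mul_dotProduct_le_quad_sumElim {κ ι : Type*} [Fintype κ] [Fintype ι]
    {A : Matrix (κ ⊕ ι) (κ ⊕ ι) ℝ} {l : ℝ} (hl : 0 ≤ l)
    (hA : ∀ v, l * (v ⬝ᵥ v) ≤ quad A v) (a : κ → ℝ) (b : ι → ℝ) :
    l * (b ⬝ᵥ b) ≤ quad A (Sum.elim a b) := by
  have := hA (Sum.elim a b)
  rw [sumElim_dotProduct_sumElim] at this
  nlinarith [dotProduct_self_nonneg a]

theorem le_pow_mul_add_sum_of_le_mul_add {η : ℝ} (hη : 0 ≤ η) {V d : ℕ → ℝ} {K : ℕ}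
    (hstep : ∀ s < K, V (s + 1) ≤ η * V s + d s) :
    V K ≤ η ^ K * V 0 + ∑ j ∈ range K, η ^ (K - 1 - j) * d j := by
  induction K with
  | zero => simp
  | succ K ih =>
    have hsum : ∑ j ∈ range (K + 1), η ^ (K + 1 - 1 - j) * d j
        = η * ∑ j ∈ range K, η ^ (K - 1 - j) * d j + d K := by
      rw [sum_range_succ, mul_sum]
      congr 1
      · refine sum_congr rfl fun j hj => ?_
        rw [show K + 1 - 1 - j = K - 1 - j + 1 by grind, pow_succ']
        ring
      · simp
    calc V (K + 1) ≤ η * V K + d K := hstep K K.lt_succ_self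
      _ ≤ η * (η ^ K * V 0 + ∑ j ∈ range K, η ^ (K - 1 - j) * d j) + d K := by
          gcongr; exact ih fun s hs => hstep s (hs.trans K.lt_succ_self)
      _ = _ := by rw [hsum]; ring

theorem exists_mul_pow_lt {η : ℝ} (hη0 : 0 ≤ η) (hη1 : η < 1) (b : ℝ) {a : ℝ} (ha : 0 < a) :
    ∃ T : ℕ, b * η ^ T < a := by
  have := (tendsto_pow_atTop_nhds_zero_of_lt_one hη0 hη1).const_mul b
  rw [mul_zero] at this
  exact (this.eventually (gt_mem_nhds ha)).exists

theorem mem_of_forall_succ_mem {α : Type*} {X : Set α} {x : ℕ → α} {K : ℕ} (h0 : x 0 ∈ X)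
    (hsucc : ∀ s < K, x (s + 1) ∈ X) : x K ∈ X := by
  cases K with
  | zero => exact h0
  | succ K => exact hsucc K K.lt_succ_self

section Trajectories

variable {n m q o r : ℕ}
  {f : (Fin n → ℝ) → (Fin m → ℝ) → (Fin q → ℝ) → (Fin o → ℝ) → (Fin n → ℝ)}
  {h : (Fin n → ℝ) → (Fin m → ℝ) → (Fin q → ℝ) → (Fin o → ℝ) → (Fin r → ℝ)}
  {Xs : Set (Fin n → ℝ)} {Us : Set (Fin m → ℝ)} {Ws : Set (Fin q → ℝ)} {Ps : Set (Fin o → ℝ)}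
  {K : ℕ} {x xt : ℕ → Fin n → ℝ} {u : ℕ → Fin m → ℝ} {w wt : ℕ → Fin q → ℝ}
  {p pt : Fin o → ℝ} {y yt : ℕ → Fin r → ℝ}

theorem trajectory_mem (hx0 : x 0 ∈ Xs) (hZ : ∀ s < K, ZmemS f Xs Us Ws Ps (x s) (u s) (w s) p)
    (hrec : ∀ s < K, x (s + 1) = f (x s) (u s) (w s) p) : x K ∈ Xs :=
  mem_of_forall_succ_mem hx0 fun s hs => hrec s hs ▸ (hZ s hs).2.2.2.2

theorem lyapunov_le_along_trajectories {Q : Matrix (Fin q) (Fin q) ℝ}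
    {R : Matrix (Fin r) (Fin r) ℝ} {η : ℝ} (hη0 : 0 ≤ η)
    {G : (Fin n → ℝ) → (Fin n → ℝ) → (Fin o → ℝ) → (Fin o → ℝ) → ℝ}
    (hGdiss : ∀ xx uu ww pp xxt wwt ppt,
      ZmemS f Xs Us Ws Ps xx uu ww pp → ZmemS f Xs Us Ws Ps xxt uu wwt ppt →
      G (f xx uu ww pp) (f xxt uu wwt ppt) pp ppt
        ≤ η * G xx xxt pp ppt + quad Q (ww - wwt)
          + quad R (h xx uu ww pp - h xxt uu wwt ppt))
    (hZ : ∀ s < K, ZmemS f Xs Us Ws Ps (x s) (u s) (w s) p)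
    (hZt : ∀ s < K, ZmemS f Xs Us Ws Ps (xt s) (u s) (wt s) pt)
    (hrec : ∀ s < K, x (s + 1) = f (x s) (u s) (w s) p)
    (hrect : ∀ s < K, xt (s + 1) = f (xt s) (u s) (wt s) pt)
    (hy : ∀ s < K, y s = h (x s) (u s) (w s) p)
    (hyt : ∀ s < K, yt s = h (xt s) (u s) (wt s) pt) :
    G (x K) (xt K) p pt ≤ η ^ K * G (x 0) (xt 0) p pt
      + ∑ j ∈ range K, η ^ (K - 1 - j) * (quad Q (w j - wt j) + quad R (y j - yt j)) := by
  refine le_pow_mul_add_sum_of_le_mul_add (V := fun s => G (x s) (xt s) p pt) hη0 fun s hs => ?_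
  have := hGdiss _ _ _ _ _ _ _ (hZ s hs) (hZt s hs)
  rw [← hrec s hs, ← hrect s hs, ← hy s hs, ← hyt s hs] at this
  linarith

end Trajectories

theorem joint_iIOSS_implies_uniform_PE_general
    {n m q o r : ℕ}
    (f : (Fin n → ℝ) → (Fin m → ℝ) → (Fin q → ℝ) → (Fin o → ℝ) → (Fin n → ℝ))
    (h : (Fin n → ℝ) → (Fin m → ℝ) → (Fin q → ℝ) → (Fin o → ℝ) → (Fin r → ℝ))
    (Xs : Set (Fin n → ℝ)) (Us : Set (Fin m → ℝ)) (Ws : Set (Fin q → ℝ))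
    (Ps : Set (Fin o → ℝ))
    (Glo Ghi : Matrix (Fin n ⊕ Fin o) (Fin n ⊕ Fin o) ℝ)
    (Q : Matrix (Fin q) (Fin q) ℝ) (R : Matrix (Fin r) (Fin r) ℝ)
    (hGlo : Glo.PosDef) (hGhi : Ghi.PosDef)
    (η : ℝ) (hη0 : 0 ≤ η) (hη1 : η < 1)
    (G : (Fin n → ℝ) → (Fin n → ℝ) → (Fin o → ℝ) → (Fin o → ℝ) → ℝ)
    (hGbnd : ∀ a b pp ppt, a ∈ Xs → b ∈ Xs → pp ∈ Ps → ppt ∈ Ps →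
      quad Glo (Sum.elim (a - b) (pp - ppt)) ≤ G a b pp ppt
        ∧ G a b pp ppt ≤ quad Ghi (Sum.elim (a - b) (pp - ppt)))
    (hGdiss : ∀ xx uu ww pp xxt wwt ppt,
      ZmemS f Xs Us Ws Ps xx uu ww pp → ZmemS f Xs Us Ws Ps xxt uu wwt ppt →
      G (f xx uu ww pp) (f xxt uu wwt ppt) pp ppt
        ≤ η * G xx xxt pp ppt + quad Q (ww - wwt)
          + quad R (h xx uu ww pp - h xxt uu wwt ppt))
    (lminGlo lmaxGhi : ℝ)
    (hlmin : IsGreatest {l : ℝ | ∀ v : Fin n ⊕ Fin o → ℝ, l * (v ⬝ᵥ v) ≤ quad Glo v}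
        lminGlo)
    (hlmax : IsLeast {l : ℝ | ∀ v : Fin n ⊕ Fin o → ℝ, quad Ghi v ≤ l * (v ⬝ᵥ v)}
        lmaxGhi) :
    (∃ T : ℕ, 0 < lminGlo - lmaxGhi * η ^ T)
    ∧ ∀ T : ℕ, 0 < lminGlo - lmaxGhi * η ^ T →
      ∀ K : ℕ, T ≤ K →
      ∀ (x xt : ℕ → Fin n → ℝ) (u : ℕ → Fin m → ℝ) (w wt : ℕ → Fin q → ℝ)
        (p pt : Fin o → ℝ) (y yt : ℕ → Fin r → ℝ),
      x 0 ∈ Xs → xt 0 ∈ Xs → p ∈ Ps → pt ∈ Ps →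
      (∀ s < K, ZmemS f Xs Us Ws Ps (x s) (u s) (w s) p) →
      (∀ s < K, ZmemS f Xs Us Ws Ps (xt s) (u s) (wt s) pt) →
      (∀ s < K, x (s + 1) = f (x s) (u s) (w s) p) →
      (∀ s < K, xt (s + 1) = f (xt s) (u s) (wt s) pt) →
      (∀ s < K, y s = h (x s) (u s) (w s) p) →
      (∀ s < K, yt s = h (xt s) (u s) (wt s) pt) →
      ((lminGlo - lmaxGhi * η ^ T) * ((p - pt) ⬝ᵥ (p - pt))
          ≤ lmaxGhi * η ^ K * ((x 0 - xt 0) ⬝ᵥ (x 0 - xt 0))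
            + ∑ j ∈ Finset.range K, η ^ j *
                (quad Q (w (K - 1 - j) - wt (K - 1 - j))
                  + quad R (y (K - 1 - j) - yt (K - 1 - j))))
        ∧ quad (((lminGlo - lmaxGhi * η ^ T) •
              (1 : Matrix (Fin o) (Fin o) ℝ))) (p - pt)
            ≤ η ^ K * quad ((lmaxGhi • (1 : Matrix (Fin n) (Fin n) ℝ))) (x 0 - xt 0)
              + ∑ j ∈ Finset.range K, η ^ (K - 1 - j) *
                  (quad Q (w j - wt j) + quad R (y j - yt j)) := by
  have hlmin_pos : 0 < lminGlo := by
    obtain ⟨c, hc, hcGlo⟩ := hGlo.exists_pos_mul_dotProduct_le_quad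
    exact hc.trans_le (hlmin.2 hcGlo)
  have hlmax_nonneg : 0 ≤ lmaxGhi := hGhi.posSemidef.nonneg_of_isLeast_quad_le hlmax
  refine ⟨(exists_mul_pow_lt hη0 hη1 lmaxGhi hlmin_pos).imp fun _ => sub_pos.mpr, ?_⟩
  intro T _ K hTK x xt u w wt p pt y yt hx0 hxt0 hp hpt hZ hZt hrec hrect hy hyt
  have hlow : lminGlo * ((p - pt) ⬝ᵥ (p - pt)) ≤ G (x K) (xt K) p pt :=
    (mul_dotProduct_le_quad_sumElim hlmin_pos.le hlmin.1 _ _).trans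
      (hGbnd _ _ _ _ (trajectory_mem hx0 hZ hrec) (trajectory_mem hxt0 hZt hrect) hp hpt).1
  have hup : G (x 0) (xt 0) p pt
      ≤ lmaxGhi * ((x 0 - xt 0) ⬝ᵥ (x 0 - xt 0) + (p - pt) ⬝ᵥ (p - pt)) := by
    simpa only [sumElim_dotProduct_sumElim] using
      (hGbnd _ _ _ _ hx0 hxt0 hp hpt).2.trans (hlmax.1 _)
  have hdecay := lyapunov_le_along_trajectories hη0 hGdiss hZ hZt hrec hrect hy hyt
  have hηKT : lmaxGhi * η ^ K ≤ lmaxGhi * η ^ T :=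
    mul_le_mul_of_nonneg_left (pow_le_pow_of_le_one hη0 hη1.le hTK) hlmax_nonneg
  have key : (lminGlo - lmaxGhi * η ^ T) * ((p - pt) ⬝ᵥ (p - pt))
      ≤ lmaxGhi * η ^ K * ((x 0 - xt 0) ⬝ᵥ (x 0 - xt 0)) + ∑ j ∈ range K,
        η ^ (K - 1 - j) * (quad Q (w j - wt j) + quad R (y j - yt j)) := by
    nlinarith [dotProduct_self_nonneg (p - pt), pow_nonneg hη0 K]
  refine ⟨?_, ?_⟩
  · rw [← sum_range_reflect] at key
    convert key using 4 with j hj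
    rw [Nat.sub_sub_self (by grind)]
  · rw [quad_smul_one, quad_smul_one]
    linarith

/-- **Proposition 1, converse direction, PE part.**
A joint i-IOSS Lyapunov function `G` for the augmented state implies uniform persistent
excitation: for every `T` with `λ_min(G_lo) − λ_max(G_hi)η^T > 0` (such `T` exists since
`η < 1`), every `K ≥ T` and every pair of length-`K` trajectories with common inputs,
`(λ_min(G_lo) − λ_max(G_hi)η^T)‖p−p̃‖² ≤ λ_max(G_hi)η^K‖x_0−x̃_0‖²
 + Σ_{j=1}^{K} η^{j−1}(‖w_{K−j}−w̃_{K−j}‖²_Q + ‖y_{K−j}−ỹ_{K−j}‖²_R)`;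
in particular the pair belongs to `𝔼_K` with `S_p := (λ_min(G_lo)−λ_max(G_hi)η^T)I`,
`P_p := λ_max(G_hi)I`, `Q_p := Q`, `R_p := R`, `η_p := η`. -/
theorem joint_iIOSS_implies_uniform_PE
    {n m q o r : ℕ}
    (f : (Fin n → ℝ) → (Fin m → ℝ) → (Fin q → ℝ) → (Fin o → ℝ) → (Fin n → ℝ))
    (h : (Fin n → ℝ) → (Fin m → ℝ) → (Fin q → ℝ) → (Fin o → ℝ) → (Fin r → ℝ))
    (Xs : Set (Fin n → ℝ)) (Us : Set (Fin m → ℝ)) (Ws : Set (Fin q → ℝ))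
    (Ps : Set (Fin o → ℝ))
    (Glo Ghi : Matrix (Fin n ⊕ Fin o) (Fin n ⊕ Fin o) ℝ)
    (Q : Matrix (Fin q) (Fin q) ℝ) (R : Matrix (Fin r) (Fin r) ℝ)
    (hGlo : Glo.PosDef) (hGhi : Ghi.PosDef) (hQ : Q.PosDef) (hR : R.PosDef)
    (η : ℝ) (hη0 : 0 ≤ η) (hη1 : η < 1)
    (G : (Fin n → ℝ) → (Fin n → ℝ) → (Fin o → ℝ) → (Fin o → ℝ) → ℝ)
    (hGnn : ∀ a b pp ppt, a ∈ Xs → b ∈ Xs → pp ∈ Ps → ppt ∈ Ps → 0 ≤ G a b pp ppt)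
    (hGbnd : ∀ a b pp ppt, a ∈ Xs → b ∈ Xs → pp ∈ Ps → ppt ∈ Ps →
      quad Glo (Sum.elim (a - b) (pp - ppt)) ≤ G a b pp ppt
        ∧ G a b pp ppt ≤ quad Ghi (Sum.elim (a - b) (pp - ppt)))
    (hGdiss : ∀ xx uu ww pp xxt wwt ppt,
      ZmemS f Xs Us Ws Ps xx uu ww pp → ZmemS f Xs Us Ws Ps xxt uu wwt ppt →
      G (f xx uu ww pp) (f xxt uu wwt ppt) pp ppt
        ≤ η * G xx xxt pp ppt + quad Q (ww - wwt)
          + quad R (h xx uu ww pp - h xxt uu wwt ppt))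
    (lminGlo lmaxGhi : ℝ)
    (hlmin : IsGreatest {l : ℝ | ∀ v : Fin n ⊕ Fin o → ℝ, l * (v ⬝ᵥ v) ≤ quad Glo v}
        lminGlo)
    (hlmax : IsLeast {l : ℝ | ∀ v : Fin n ⊕ Fin o → ℝ, quad Ghi v ≤ l * (v ⬝ᵥ v)}
        lmaxGhi) :
    (∃ T : ℕ, 0 < lminGlo - lmaxGhi * η ^ T)
    ∧ ∀ T : ℕ, 0 < lminGlo - lmaxGhi * η ^ T →
      ∀ K : ℕ, T ≤ K →
      ∀ (x xt : ℕ → Fin n → ℝ) (u : ℕ → Fin m → ℝ) (w wt : ℕ → Fin q → ℝ)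
        (p pt : Fin o → ℝ) (y yt : ℕ → Fin r → ℝ),
      x 0 ∈ Xs → xt 0 ∈ Xs → p ∈ Ps → pt ∈ Ps →
      (∀ s < K, ZmemS f Xs Us Ws Ps (x s) (u s) (w s) p) →
      (∀ s < K, ZmemS f Xs Us Ws Ps (xt s) (u s) (wt s) pt) →
      (∀ s < K, x (s + 1) = f (x s) (u s) (w s) p) →
      (∀ s < K, xt (s + 1) = f (xt s) (u s) (wt s) pt) →
      (∀ s < K, y s = h (x s) (u s) (w s) p) →
      (∀ s < K, yt s = h (xt s) (u s) (wt s) pt) →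
      ((lminGlo - lmaxGhi * η ^ T) * ((p - pt) ⬝ᵥ (p - pt))
          ≤ lmaxGhi * η ^ K * ((x 0 - xt 0) ⬝ᵥ (x 0 - xt 0))
            + ∑ j ∈ Finset.range K, η ^ j *
                (quad Q (w (K - 1 - j) - wt (K - 1 - j))
                  + quad R (y (K - 1 - j) - yt (K - 1 - j))))
        ∧ quad (((lminGlo - lmaxGhi * η ^ T) •
              (1 : Matrix (Fin o) (Fin o) ℝ))) (p - pt)
            ≤ η ^ K * quad ((lmaxGhi • (1 : Matrix (Fin n) (Fin n) ℝ))) (x 0 - xt 0)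
              + ∑ j ∈ Finset.range K, η ^ (K - 1 - j) *
                  (quad Q (w j - wt j) + quad R (y j - yt j)) :=
  joint_iIOSS_implies_uniform_PE_general f h Xs Us Ws Ps Glo Ghi Q R hGlo hGhi η hη0 hη1 G hGbnd
    hGdiss lminGlo lmaxGhi hlmin hlmax
end

section
/- (Proposition 1, converse direction, detectability part) Let G : 𝕏×𝕏×ℙ×ℙ → ℝ_{≥0} be a joint i-IOSS Lyapunov function, i.e., there exist symmetric positive definite matrices G_lo, G_hi, Q, R and η ∈ [0,1) such that ‖(x−x̃, p−p̃)‖²_{G_lo} ≤ G(x,x̃,p,p̃) ≤ ‖(x−x̃, p−p̃)‖²_{G_hi} and G(f(x,u,w,p), f(x̃,u,w̃,p̃), p, p̃) ≤ η G(x,x̃,p,p̃) + ‖w−w̃‖²_Q + ‖h(x,u,w,p)−h(x̃,u,w̃,p̃)‖²_R for all (x,u,w,p),(x̃,u,w̃,p̃) ∈ ℤ. Then for every pair of system trajectories in ℤ with common inputs and outputs y_s, ỹ_s, and all t ∈ ℕ: λ_min(G_lo)‖x_t−x̃_t‖² ≤ λ_max(G_hi)η^t‖x_0−x̃_0‖²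 + Σ_{j=1}^{t} η^{j−1}(λ_max(G_hi)‖p−p̃‖² + ‖w_{t−j}−w̃_{t−j}‖²_Q + ‖y_{t−j}−ỹ_{t−j}‖²_R); that is, the system is exponentially i-IOSS in the state when p is regarded as an additional constant input. -/
open Matrix Finset

lemma quad_nonneg {ι : Type*} [Fintype ι] {M : Matrix ι ι ℝ} (hM : M.PosSemidef)
    (v : ι → ℝ) : 0 ≤ quad M v := by
  simpa [quad] using hM.dotProduct_mulVec_nonneg v

lemma mul_add_le_quad_sumElim {ι κ : Type*} [Fintype ι] [Fintype κ]
    {M : Matrix (ι ⊕ κ) (ι ⊕ κ) ℝ} {l : ℝ} (hl : ∀ v, l * (v ⬝ᵥ v) ≤ quad M v)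
    (a : ι → ℝ) (b : κ → ℝ) : l * (a ⬝ᵥ a + b ⬝ᵥ b) ≤ quad M (Sum.elim a b) := by
  simpa only [sumElim_dotProduct_sumElim] using hl (Sum.elim a b)

lemma quad_sumElim_le_mul_add {ι κ : Type*} [Fintype ι] [Fintype κ]
    {M : Matrix (ι ⊕ κ) (ι ⊕ κ) ℝ} {l : ℝ} (hl : ∀ v, quad M v ≤ l * (v ⬝ᵥ v))
    (a : ι → ℝ) (b : κ → ℝ) : quad M (Sum.elim a b) ≤ l * (a ⬝ᵥ a + b ⬝ᵥ b) := by
  simpa only [sumElim_dotProduct_sumElim] using hl (Sum.elim a b)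

lemma pow_mul_add_sum_le_sum_mul_add {η a : ℝ} (hη0 : 0 ≤ η) (hη1 : η ≤ 1) (ha : 0 ≤ a)
    {t : ℕ} (ht : 0 < t) (g : ℕ → ℝ) :
    η ^ t * a + ∑ j ∈ range t, η ^ j * g j ≤ ∑ j ∈ range t, η ^ j * (a + g j) := by
  have hpow : η ^ t ≤ ∑ j ∈ range t, η ^ j :=
    calc η ^ t ≤ η ^ (t - 1) := pow_le_pow_of_le_one hη0 hη1 (Nat.sub_le t 1)
      _ ≤ ∑ j ∈ range t, η ^ j :=
        single_le_sum (fun j _ => pow_nonneg hη0 j) (mem_range.mpr (Nat.sub_lt ht one_pos))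
  simp only [mul_add, sum_add_distrib, ← sum_mul]
  gcongr

lemma le_pow_mul_add_sum_of_step_le {V c : ℕ → ℝ} {η : ℝ} (hη : 0 ≤ η) {t : ℕ}
    (hstep : ∀ k < t, V (k + 1) ≤ η * V k + c k) :
    V t ≤ η ^ t * V 0 + ∑ j ∈ range t, η ^ j * c (t - 1 - j) := by
  induction t with
  | zero => simp
  | succ k ih =>
    have ih := ih fun s hs => hstep s (Nat.lt_succ_of_lt hs)
    have hshift : ∑ j ∈ range k, η ^ (j + 1) * c (k + 1 - 1 - (j + 1))
        = η * ∑ j ∈ range k, η ^ j * c (k - 1 - j) := by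
      rw [mul_sum]
      refine sum_congr rfl fun j _ => ?_
      rw [show k + 1 - 1 - (j + 1) = k - 1 - j by omega, pow_succ]
      ring
    calc V (k + 1) ≤ η * V k + c k := hstep k k.lt_succ_self
      _ ≤ η * (η ^ k * V 0 + ∑ j ∈ range k, η ^ j * c (k - 1 - j)) + c k := by gcongr
      _ = η ^ (k + 1) * V 0 + ∑ j ∈ range (k + 1), η ^ j * c (k + 1 - 1 - j) := by
        rw [sum_range_succ', hshift]
        simp only [pow_zero, one_mul, Nat.add_sub_cancel, Nat.sub_zero, pow_succ]
        ring

lemma mem_of_trajectory {n m q o : ℕ}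
    {f : (Fin n → ℝ) → (Fin m → ℝ) → (Fin q → ℝ) → (Fin o → ℝ) → (Fin n → ℝ)}
    {Xs : Set (Fin n → ℝ)} {Us : Set (Fin m → ℝ)} {Ws : Set (Fin q → ℝ)}
    {Ps : Set (Fin o → ℝ)} {x : ℕ → Fin n → ℝ} {u : ℕ → Fin m → ℝ} {w : ℕ → Fin q → ℝ}
    {p : Fin o → ℝ} {t : ℕ} (hx0 : x 0 ∈ Xs)
    (hZ : ∀ s < t, ZmemS f Xs Us Ws Ps (x s) (u s) (w s) p)
    (hdyn : ∀ s < t, x (s + 1) = f (x s) (u s) (w s) p) :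
    ∀ s ≤ t, x s ∈ Xs
  | 0, _ => hx0
  | s + 1, hs => hdyn s hs ▸ (hZ s hs).2.2.2.2

theorem joint_iIOSS_implies_state_detectability_general
    {n m q o r : ℕ}
    (f : (Fin n → ℝ) → (Fin m → ℝ) → (Fin q → ℝ) → (Fin o → ℝ) → (Fin n → ℝ))
    (h : (Fin n → ℝ) → (Fin m → ℝ) → (Fin q → ℝ) → (Fin o → ℝ) → (Fin r → ℝ))
    (Xs : Set (Fin n → ℝ)) (Us : Set (Fin m → ℝ)) (Ws : Set (Fin q → ℝ))
    (Ps : Set (Fin o → ℝ))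
    (Glo Ghi : Matrix (Fin n ⊕ Fin o) (Fin n ⊕ Fin o) ℝ)
    (Q : Matrix (Fin q) (Fin q) ℝ) (R : Matrix (Fin r) (Fin r) ℝ)
    (hGlo : Glo.PosDef) (hGhi : Ghi.PosDef)
    (η : ℝ) (hη0 : 0 ≤ η) (hη1 : η < 1)
    (G : (Fin n → ℝ) → (Fin n → ℝ) → (Fin o → ℝ) → (Fin o → ℝ) → ℝ)
    (hGbnd : ∀ a b pp ppt, a ∈ Xs → b ∈ Xs → pp ∈ Ps → ppt ∈ Ps →
      quad Glo (Sum.elim (a - b) (pp - ppt)) ≤ G a b pp ppt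
        ∧ G a b pp ppt ≤ quad Ghi (Sum.elim (a - b) (pp - ppt)))
    (hGdiss : ∀ xx uu ww pp xxt wwt ppt,
      ZmemS f Xs Us Ws Ps xx uu ww pp → ZmemS f Xs Us Ws Ps xxt uu wwt ppt →
      G (f xx uu ww pp) (f xxt uu wwt ppt) pp ppt
        ≤ η * G xx xxt pp ppt + quad Q (ww - wwt)
          + quad R (h xx uu ww pp - h xxt uu wwt ppt))
    (lminGlo lmaxGhi : ℝ)
    (hlmin : IsGreatest {l : ℝ | ∀ v : Fin n ⊕ Fin o → ℝ, l * (v ⬝ᵥ v) ≤ quad Glo v}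
        lminGlo)
    (hlmax : IsLeast {l : ℝ | ∀ v : Fin n ⊕ Fin o → ℝ, quad Ghi v ≤ l * (v ⬝ᵥ v)}
        lmaxGhi)
    -- the two trajectories with common inputs
    (x xt : ℕ → Fin n → ℝ) (u : ℕ → Fin m → ℝ) (w wt : ℕ → Fin q → ℝ)
    (p pt : Fin o → ℝ) (y yt : ℕ → Fin r → ℝ) (t : ℕ)
    (hx0 : x 0 ∈ Xs) (hxt0 : xt 0 ∈ Xs) (hp : p ∈ Ps) (hpt : pt ∈ Ps)
    (hZ : ∀ s < t, ZmemS f Xs Us Ws Ps (x s) (u s) (w s) p)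
    (hZt : ∀ s < t, ZmemS f Xs Us Ws Ps (xt s) (u s) (wt s) pt)
    (hdyn : ∀ s < t, x (s + 1) = f (x s) (u s) (w s) p)
    (hdynt : ∀ s < t, xt (s + 1) = f (xt s) (u s) (wt s) pt)
    (hy : ∀ s < t, y s = h (x s) (u s) (w s) p)
    (hyt : ∀ s < t, yt s = h (xt s) (u s) (wt s) pt) :
    lminGlo * ((x t - xt t) ⬝ᵥ (x t - xt t))
      ≤ lmaxGhi * η ^ t * ((x 0 - xt 0) ⬝ᵥ (x 0 - xt 0))
        + ∑ j ∈ Finset.range t, η ^ j *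
            (lmaxGhi * ((p - pt) ⬝ᵥ (p - pt))
              + quad Q (w (t - 1 - j) - wt (t - 1 - j))
              + quad R (y (t - 1 - j) - yt (t - 1 - j))) := by
  obtain rfl | ht := Nat.eq_zero_or_pos t
  · -- no sum is left to absorb the parameter term, so evaluate `G` at the pair `(p, p)`
    have hG := hGbnd (x 0) (xt 0) p p hx0 hxt0 hp hp
    have hlo := mul_add_le_quad_sumElim hlmin.1 (x 0 - xt 0) (p - p)
    have hhi := quad_sumElim_le_mul_add hlmax.1 (x 0 - xt 0) (p - p)
    simp only [sub_self, dotProduct_zero, add_zero] at hG hlo hhi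
    simp only [range_zero, sum_empty, pow_zero, mul_one, add_zero]
    linarith [hG.1, hG.2]
  have hpmax : 0 ≤ lmaxGhi * ((p - pt) ⬝ᵥ (p - pt)) := by
    have := quad_sumElim_le_mul_add hlmax.1 (0 : Fin n → ℝ) (p - pt)
    simp only [dotProduct_zero, zero_add] at this
    exact (quad_nonneg hGhi.posSemidef _).trans this
  have hpmin : 0 ≤ lminGlo * ((p - pt) ⬝ᵥ (p - pt)) :=
    mul_nonneg (hlmin.2 fun v => by simpa using quad_nonneg hGlo.posSemidef v)
      (by simpa using dotProduct_self_star_nonneg (p - pt))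
  have hdecay := le_pow_mul_add_sum_of_step_le (V := fun k => G (x k) (xt k) p pt)
    (c := fun k => quad Q (w k - wt k) + quad R (y k - yt k)) hη0 fun k hk => by
      simp only [hdyn k hk, hdynt k hk, hy k hk, hyt k hk, ← add_assoc]
      exact hGdiss _ _ _ _ _ _ _ (hZ k hk) (hZt k hk)
  have hlo := (mul_add_le_quad_sumElim hlmin.1 (x t - xt t) (p - pt)).trans
    (hGbnd _ _ _ _ (mem_of_trajectory hx0 hZ hdyn t le_rfl)
      (mem_of_trajectory hxt0 hZt hdynt t le_rfl) hp hpt).1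
  have hhi := mul_le_mul_of_nonneg_left ((hGbnd _ _ _ _ hx0 hxt0 hp hpt).2.trans
    (quad_sumElim_le_mul_add hlmax.1 (x 0 - xt 0) (p - pt))) (pow_nonneg hη0 t)
  have habsorb := pow_mul_add_sum_le_sum_mul_add hη0 hη1.le hpmax ht
    fun j => quad Q (w (t - 1 - j) - wt (t - 1 - j)) + quad R (y (t - 1 - j) - yt (t - 1 - j))
  simp only [add_assoc]
  linear_combination hlo + hdecay + hhi + habsorb + hpmin

/-- **Proposition 1, converse direction, detectability part.**
A joint i-IOSS Lyapunov function `G` for the augmented state `(x,p)` yields an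
exponential i-IOSS bound for the state when `p` is regarded as a constant input:
`λ_min(G_lo)‖x_t−x̃_t‖² ≤ λ_max(G_hi)η^t‖x_0−x̃_0‖²
 + Σ_{j=1}^{t} η^{j−1}(λ_max(G_hi)‖p−p̃‖² + ‖w_{t−j}−w̃_{t−j}‖²_Q + ‖y_{t−j}−ỹ_{t−j}‖²_R)`. -/
theorem joint_iIOSS_implies_state_detectability
    {n m q o r : ℕ}
    (f : (Fin n → ℝ) → (Fin m → ℝ) → (Fin q → ℝ) → (Fin o → ℝ) → (Fin n → ℝ))
    (h : (Fin n → ℝ) → (Fin m → ℝ) → (Fin q → ℝ) → (Fin o → ℝ) → (Fin r → ℝ))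
    (Xs : Set (Fin n → ℝ)) (Us : Set (Fin m → ℝ)) (Ws : Set (Fin q → ℝ))
    (Ps : Set (Fin o → ℝ))
    (Glo Ghi : Matrix (Fin n ⊕ Fin o) (Fin n ⊕ Fin o) ℝ)
    (Q : Matrix (Fin q) (Fin q) ℝ) (R : Matrix (Fin r) (Fin r) ℝ)
    (hGlo : Glo.PosDef) (hGhi : Ghi.PosDef) (hQ : Q.PosDef) (hR : R.PosDef)
    (η : ℝ) (hη0 : 0 ≤ η) (hη1 : η < 1)
    (G : (Fin n → ℝ) → (Fin n → ℝ) → (Fin o → ℝ) → (Fin o → ℝ) → ℝ)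
    (hGnn : ∀ a b pp ppt, a ∈ Xs → b ∈ Xs → pp ∈ Ps → ppt ∈ Ps → 0 ≤ G a b pp ppt)
    (hGbnd : ∀ a b pp ppt, a ∈ Xs → b ∈ Xs → pp ∈ Ps → ppt ∈ Ps →
      quad Glo (Sum.elim (a - b) (pp - ppt)) ≤ G a b pp ppt
        ∧ G a b pp ppt ≤ quad Ghi (Sum.elim (a - b) (pp - ppt)))
    (hGdiss : ∀ xx uu ww pp xxt wwt ppt,
      ZmemS f Xs Us Ws Ps xx uu ww pp → ZmemS f Xs Us Ws Ps xxt uu wwt ppt →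
      G (f xx uu ww pp) (f xxt uu wwt ppt) pp ppt
        ≤ η * G xx xxt pp ppt + quad Q (ww - wwt)
          + quad R (h xx uu ww pp - h xxt uu wwt ppt))
    (lminGlo lmaxGhi : ℝ)
    (hlmin : IsGreatest {l : ℝ | ∀ v : Fin n ⊕ Fin o → ℝ, l * (v ⬝ᵥ v) ≤ quad Glo v}
        lminGlo)
    (hlmax : IsLeast {l : ℝ | ∀ v : Fin n ⊕ Fin o → ℝ, quad Ghi v ≤ l * (v ⬝ᵥ v)}
        lmaxGhi)
    -- the two trajectories with common inputs
    (x xt : ℕ → Fin n → ℝ) (u : ℕ → Fin m → ℝ) (w wt : ℕ → Fin q → ℝ)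
    (p pt : Fin o → ℝ) (y yt : ℕ → Fin r → ℝ) (t : ℕ)
    (hx0 : x 0 ∈ Xs) (hxt0 : xt 0 ∈ Xs) (hp : p ∈ Ps) (hpt : pt ∈ Ps)
    (hZ : ∀ s < t, ZmemS f Xs Us Ws Ps (x s) (u s) (w s) p)
    (hZt : ∀ s < t, ZmemS f Xs Us Ws Ps (xt s) (u s) (wt s) pt)
    (hdyn : ∀ s < t, x (s + 1) = f (x s) (u s) (w s) p)
    (hdynt : ∀ s < t, xt (s + 1) = f (xt s) (u s) (wt s) pt)
    (hy : ∀ s < t, y s = h (x s) (u s) (w s) p)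
    (hyt : ∀ s < t, yt s = h (xt s) (u s) (wt s) pt) :
    lminGlo * ((x t - xt t) ⬝ᵥ (x t - xt t))
      ≤ lmaxGhi * η ^ t * ((x 0 - xt 0) ⬝ᵥ (x 0 - xt 0))
        + ∑ j ∈ Finset.range t, η ^ j *
            (lmaxGhi * ((p - pt) ⬝ᵥ (p - pt))
              + quad Q (w (t - 1 - j) - wt (t - 1 - j))
              + quad R (y (t - 1 - j) - yt (t - 1 - j))) :=
  joint_iIOSS_implies_state_detectability_general f h Xs Us Ws Ps Glo Ghi Q R hGlo hGhi η hη0 hη1 G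
    hGbnd hGdiss lminGlo lmaxGhi hlmin hlmax x xt u w wt p pt y yt t hx0 hxt0 hp hpt hZ hZt hdyn
    hdynt hy hyt
end
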